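/- Let M > 0, δ_S > 0, y₀ ∈ (0, 1/4), and α > 0. Suppose f ∈ H¹(y₀,1) and constants X, G satisfy: −(δ_S/(2M))X² ≤ −Mδ_S(∫_{y₀}^1 f dy)² + Cδ_S²∫_{y₀}^1 f² dy, and the diffusion term satisfies D ≥ 2αδ_S(1−θ)(∫_{y₀}^1 f² dy − (1/(1−y₀))(∫_{y₀}^1 f dy)²) for some small θ ∈ (0, 1/8). If M = (3/2)α and B − G₂ ≤ (αδ_S + Cδ_S^{3/2})∫_{y₀}^1 f² dy, then −(δ_S/(2M))X² + (B − G₂) − (5/8)D ≤ −(α/16)δ_S ∫_{y₀}^1 f² dy, provided δ_S is sufficiently small (depending on C, α, θ). -/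

import Mathlib

/-!
Write `I = ∫ f²`, `m = ∫ f` and `L = 1 - y₀`. After substituting the three hypotheses, the
terms of order `δ_S` form `α δ_S` times a linear function of `m²` which, by Cauchy–Schwarz,
ranges over `0 ≤ m² ≤ L I`. At `m² = 0` it equals `(1 - 5/4 (1 - θ)) I ≤ -3/32 I`
(from `θ < 1/8`), at `m² = L I` it equals `(1 - 3/2 L) I ≤ -1/8 I` (from `y₀ < 1/4`), so it is
at most `-3/32 α δ_S I`. The remaining terms `C (δ_S² + δ_S^{3/2}) I` are `o(δ_S) I` and are
absorbed into the margin `α/32 δ_S I` for small `δ_S`.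
-/

open MeasureTheory Filter Topology Set

theorem sq_setIntegral_le_measureReal_mul_setIntegral_sq {α : Type*} [MeasurableSpace α]
    {μ : Measure α} {s : Set α} (hs : μ s ≠ ⊤) {f : α → ℝ} (hf : IntegrableOn f s μ)
    (hf2 : IntegrableOn (fun x => f x ^ 2) s μ) :
    (∫ x in s, f x ∂μ) ^ 2 ≤ μ.real s * ∫ x in s, f x ^ 2 ∂μ := by
  rcases eq_or_ne (μ s) 0 with h0 | h0
  · simp [setIntegral_measure_zero _ h0]
  have hm : 0 < μ.real s := ENNReal.toReal_pos h0 hs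
  have jensen := (Even.convexOn_pow (𝕜 := ℝ) even_two).map_set_average_le
    (continuous_pow 2).continuousOn isClosed_univ h0 hs (by simp) hf hf2
  simp only [setAverage_eq, smul_eq_mul] at jensen
  calc (∫ x in s, f x ∂μ) ^ 2 = μ.real s ^ 2 * ((μ.real s)⁻¹ * ∫ x in s, f x ∂μ) ^ 2 := by
        field_simp
    _ ≤ μ.real s ^ 2 * ((μ.real s)⁻¹ * ∫ x in s, f x ^ 2 ∂μ) := by gcongr
    _ = μ.real s * ∫ x in s, f x ^ 2 ∂μ := by field_simp

theorem intervalIntegral.sq_integral_le_mul_integral_sq {a b : ℝ} (hab : a ≤ b) {f : ℝ → ℝ}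
    (hf : IntegrableOn f (Ioc a b)) (hf2 : IntegrableOn (fun x => f x ^ 2) (Ioc a b)) :
    (∫ x in a..b, f x) ^ 2 ≤ (b - a) * ∫ x in a..b, f x ^ 2 := by
  simpa only [intervalIntegral.integral_of_le hab, Real.volume_real_Ioc_of_le hab] using
    sq_setIntegral_le_measureReal_mul_setIntegral_sq measure_Ioc_lt_top.ne hf hf2

theorem eventually_mul_sq_add_mul_rpow_le (C : ℝ) {ε : ℝ} (hε : 0 < ε) :
    ∀ᶠ δ in 𝓝[>] (0 : ℝ), C * δ ^ 2 + C * δ ^ ((3 : ℝ) / 2) ≤ ε * δ := by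
  have hcont : Continuous fun δ : ℝ => C * δ + C * δ ^ ((1 : ℝ) / 2) := by
    have := Real.continuous_rpow_const (q := (1 : ℝ) / 2) (by norm_num)
    fun_prop
  have hlim : Tendsto (fun δ : ℝ => C * δ + C * δ ^ ((1 : ℝ) / 2)) (𝓝[>] 0) (𝓝 0) := by
    simpa using (hcont.tendsto 0).mono_left nhdsWithin_le_nhds
  filter_upwards [hlim.eventually (gt_mem_nhds hε), self_mem_nhdsWithin]
    with δ hsmall (hpos : 0 < δ)
  calc C * δ ^ 2 + C * δ ^ ((3 : ℝ) / 2) = (C * δ + C * δ ^ ((1 : ℝ) / 2)) * δ := by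
        rw [show (3 : ℝ) / 2 = 1 / 2 + 1 by norm_num, Real.rpow_add hpos, Real.rpow_one]
        ring
    _ ≤ ε * δ := by gcongr

/-- The leading-order quadratic form, normalised by `α δ_S`: here `m2` stands for the squared
mean `(∫ f)²`, `I` for `∫ f²` and `L` for the length `1 - y₀` of the interval. -/
theorem leading_order_form_le {θ L m2 I : ℝ} (hθ : θ ≤ 1 / 8) (hL : 3 / 4 ≤ L) (hm2 : 0 ≤ m2)
    (hCS : m2 ≤ L * I) :
    -(3 / 2) * m2 + I - 5 / 4 * (1 - θ) * (I - 1 / L * m2) ≤ -(3 / 32) * I := by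
  obtain ⟨t, rfl⟩ : ∃ t, m2 = L * t := ⟨m2 / L, by field_simp⟩
  have ht : 0 ≤ t := nonneg_of_mul_nonneg_right hm2 (by linarith)
  have htI : t ≤ I := le_of_mul_le_mul_left hCS (by linarith)
  have hL0 : L ≠ 0 := by positivity
  calc -(3 / 2) * (L * t) + I - 5 / 4 * (1 - θ) * (I - 1 / L * (L * t))
      = (1 - 5 / 4 * (1 - θ)) * (I - t) + (1 - 3 / 2 * L) * t := by field_simp; ring
    _ ≤ -(3 / 32) * (I - t) + -(1 / 8) * t := by gcongr <;> linarith
    _ ≤ -(3 / 32) * I := by linarith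

theorem abstract_leading_order_estimate_general (C α θ : ℝ) (hα : 0 < α)
    (hθ1 : θ < 1/8) :
    ∃ δ1 > 0, ∀ δS : ℝ, 0 < δS → δS < δ1 →
      ∀ (M y0 X D B G2 : ℝ) (f : ℝ → ℝ),
        M = (3/2) * α → 0 < y0 → y0 < 1/4 →
        IntegrableOn f (Set.Ioc y0 1) →
        IntegrableOn (fun y => f y ^ 2) (Set.Ioc y0 1) →
        -(δS / (2 * M)) * X ^ 2
            ≤ -M * δS * (∫ y in y0..1, f y) ^ 2 + C * δS ^ 2 * ∫ y in y0..1, f y ^ 2 →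
        2 * α * δS * (1 - θ) * ((∫ y in y0..1, f y ^ 2)
            - (1 / (1 - y0)) * (∫ y in y0..1, f y) ^ 2) ≤ D →
        B - G2 ≤ (α * δS + C * δS ^ ((3:ℝ)/2)) * ∫ y in y0..1, f y ^ 2 →
        -(δS / (2 * M)) * X ^ 2 + (B - G2) - (5/8) * D
          ≤ -(α / 16) * δS * ∫ y in y0..1, f y ^ 2 := by
  obtain ⟨δ1, hδ1, hsmall⟩ := (nhdsGT_basis 0).eventually_iff.mp
    (eventually_mul_sq_add_mul_rpow_le C (ε := α / 32) (by positivity))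
  refine ⟨δ1, hδ1, fun δS hδS hδS1 M y0 X D B G2 f hM _ hy0 hf hf2 hshift hdiff hbad => ?_⟩
  have hI : 0 ≤ ∫ y in y0..1, f y ^ 2 :=
    intervalIntegral.integral_nonneg (by linarith) fun y _ => sq_nonneg (f y)
  have hform := mul_le_mul_of_nonneg_left
    (leading_order_form_le hθ1.le (by linarith : 3 / 4 ≤ 1 - y0) (sq_nonneg _)
      (intervalIntegral.sq_integral_le_mul_integral_sq (by linarith) hf hf2))
    (by positivity : 0 ≤ α * δS)
  have herr := mul_le_mul_of_nonneg_right (hsmall ⟨hδS, hδS1⟩) hI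
  subst hM
  linarith

/-- Abstract leading-order estimate of the a-contraction argument: with `M = (3/2)α`
and `y₀ < 1/4`, the negative square of the shift speed, the Poincaré-type diffusion
bound, and the bad term combine into a strictly negative multiple of `δ_S ∫ f²`. -/
theorem abstract_leading_order_estimate (C α θ : ℝ) (hC : 0 ≤ C) (hα : 0 < α)
    (hθ0 : 0 < θ) (hθ1 : θ < 1/8) :
    ∃ δ1 > 0, ∀ δS : ℝ, 0 < δS → δS < δ1 →
      ∀ (M y0 X D B G2 : ℝ) (f : ℝ → ℝ),
        M = (3/2) * α → 0 < y0 → y0 < 1/4 →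
        IntegrableOn f (Set.Ioc y0 1) →
        IntegrableOn (fun y => f y ^ 2) (Set.Ioc y0 1) →
        -(δS / (2 * M)) * X ^ 2
            ≤ -M * δS * (∫ y in y0..1, f y) ^ 2 + C * δS ^ 2 * ∫ y in y0..1, f y ^ 2 →
        2 * α * δS * (1 - θ) * ((∫ y in y0..1, f y ^ 2)
            - (1 / (1 - y0)) * (∫ y in y0..1, f y) ^ 2) ≤ D →
        B - G2 ≤ (α * δS + C * δS ^ ((3:ℝ)/2)) * ∫ y in y0..1, f y ^ 2 →
        -(δS / (2 * M)) * X ^ 2 + (B - G2) - (5/8) * D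
          ≤ -(α / 16) * δS * ∫ y in y0..1, f y ^ 2 :=
  abstract_leading_order_estimate_general C α θ hα hθ1
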